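/- arXiv:1812.03275 — 2 statements merged into one kernel-verified Lean document; each statement's English description precedes it below -/
import Mathlib

section
/- Let (α_i)_{i=1}^n and (β_j)_{j=1}^m be positive real numbers, and let P(n,m) be the set of monotone lattice paths σ from (0,0) to (n,m) in ℤ² (each step increasing one coordinate by 1). Then ∑_{σ ∈ P(n,m)} ∏_{i=1}^{n+m} 1/(α_{σ_x(i)} + β_{σ_y(i)}) = (∏_{i=1}^n 1/α_i)(∏_{j=1}^m 1/β_j), where σ_x(i), σ_y(i) denote the two coordinates of σ(i), with the convention α_0 = β_0 = 0. -/
/-!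
Let `S(n, m)` be the path sum. Splitting off the last step of a path gives
`S(n, m) = (S(n - 1, m) + S(n, m - 1)) / (α n + β m)`, and the product
`P(n, m) = ∏ 1/α_i ∏ 1/β_j` satisfies the same recursion because
`P(n - 1, m) = α n · P(n, m)` and `P(n, m - 1) = β m · P(n, m)`. The convention `α 0 = β 0 = 0`
makes these identities hold on the boundary too, where a predecessor is missing.
-/

open Finset

namespace LatticeWalk

def unitStep : Bool → ℕ × ℕ
  | true => (1, 0)
  | false => (0, 1)

variable {k : ℕ}

/-- A walk is encoded by its step sequence `s` (`true` for a step in the first coordinate);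
`point s j` is its position after `j` steps. -/
def point (s : Fin k → Bool) (j : ℕ) : ℕ × ℕ :=
  ∑ i : Fin k with i.val < j, unitStep (s i)

@[simp]
lemma point_zero (s : Fin k → Bool) : point s 0 = 0 := by
  simp [point]

lemma point_succ (s : Fin k → Bool) (i : Fin k) :
    point s (i + 1) = point s i + unitStep (s i) := by
  have : univ.filter (fun j : Fin k ↦ j.val < i.val + 1) =
      insert i (univ.filter fun j ↦ j.val < i.val) := by
    ext j; simp only [mem_filter, mem_univ, true_and, mem_insert, Fin.ext_iff]; omega
  rw [point, this, sum_insert (by simp), add_comm, point]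

lemma point_mono (s : Fin k → Bool) {j j' : ℕ} (h : j ≤ j') : point s j ≤ point s j' :=
  sum_le_sum_of_subset fun i ↦ by simp only [mem_filter, mem_univ, true_and]; omega

lemma point_snoc_of_le (s : Fin k → Bool) (b : Bool) {j : ℕ} (hj : j ≤ k) :
    point (Fin.snoc s b : Fin (k + 1) → Bool) j = point s j := by
  simp only [point, sum_filter, Fin.sum_univ_castSucc, Fin.snoc_castSucc, Fin.val_castSucc,
    Fin.val_last, if_neg (not_lt.2 hj), add_zero]

lemma point_snoc_last (s : Fin k → Bool) (b : Bool) :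
    point (Fin.snoc s b : Fin (k + 1) → Bool) (k + 1) = point s k + unitStep b := by
  simpa [point_snoc_of_le] using point_succ (Fin.snoc s b : Fin (k + 1) → Bool) (Fin.last k)

section Weights

variable {R : Type*} [CommSemiring R] (f : ℕ × ℕ → R)

def weight (s : Fin k → Bool) : R :=
  ∏ i : Fin k, f (point s (i + 1))

def pathSum (k : ℕ) (p : ℕ × ℕ) : R :=
  ∑ s : Fin k → Bool with point s k = p, weight f s

lemma weight_snoc (s : Fin k → Bool) (b : Bool) :
    weight f (Fin.snoc s b : Fin (k + 1) → Bool) = weight f s * f (point s k + unitStep b) := by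
  simp only [weight, Fin.prod_univ_castSucc, Fin.val_castSucc, Fin.val_last, point_snoc_last,
    point_snoc_of_le s b (Nat.succ_le_of_lt (Fin.is_lt _))]

lemma pathSum_succ (p : ℕ × ℕ) :
    pathSum f (k + 1) p =
      f p * ∑ b : Bool, ∑ s : Fin k → Bool with point s k + unitStep b = p, weight f s := by
  rw [pathSum, sum_filter, ← (Fin.snocEquiv fun _ ↦ Bool).sum_comp, Fintype.sum_prod_type, mul_sum]
  refine sum_congr rfl fun b _ ↦ ?_
  rw [sum_filter, mul_sum]
  refine sum_congr rfl fun s _ ↦ ?_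
  simp only [Fin.snocEquiv, Equiv.coe_fn_mk, point_snoc_last, weight_snoc]
  split_ifs with h
  · rw [h, mul_comm]
  · rw [mul_zero]

lemma sum_point_add_unitStep (b : Bool) (p : ℕ × ℕ) :
    ∑ s : Fin k → Bool with point s k + unitStep b = p + unitStep b, weight f s =
      pathSum f k p := by
  simp only [add_left_inj, pathSum]

end Weights

lemma prod_Icc_inv_succ_mul {G₀ : Type*} [CommGroupWithZero G₀] (a : ℕ → G₀) (n : ℕ)
    (h : a (n + 1) ≠ 0) :
    (∏ i ∈ Icc 1 (n + 1), (a i)⁻¹) * a (n + 1) = ∏ i ∈ Icc 1 n, (a i)⁻¹ := by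
  rw [prod_Icc_succ_top (Nat.le_add_left 1 n), inv_mul_cancel_right₀ h]

section InverseSums

variable {K : Type*} [Field K] [LinearOrder K] [IsStrictOrderedRing K] (α β : ℕ → K)

theorem pathSum_inv_add (hα0 : α 0 = 0) (hβ0 : β 0 = 0) {n m : ℕ}
    (hα : ∀ i, 1 ≤ i → i ≤ n → 0 < α i) (hβ : ∀ j, 1 ≤ j → j ≤ m → 0 < β j) :
    pathSum (fun p ↦ (α p.1 + β p.2)⁻¹) (n + m) (n, m) =
      (∏ i ∈ Icc 1 n, (α i)⁻¹) * ∏ j ∈ Icc 1 m, (β j)⁻¹ := by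
  induction hk : n + m generalizing n m with
  | zero =>
    obtain ⟨rfl, rfl⟩ : n = 0 ∧ m = 0 := by omega
    simp [pathSum, weight, Prod.mk_zero_zero]
  | succ k ih =>
    set P := (∏ i ∈ Icc 1 n, (α i)⁻¹) * ∏ j ∈ Icc 1 m, (β j)⁻¹
    have hx : ∑ s : Fin k → Bool with point s k + unitStep true = (n, m),
        weight (fun p ↦ (α p.1 + β p.2)⁻¹) s = P * α n := by
      rcases n with _ | n
      · rw [hα0, mul_zero]
        exact sum_eq_zero fun s hs ↦
          absurd (congrArg Prod.fst (mem_filter.1 hs).2) (by simp [unitStep])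
      · rw [show ((n + 1, m) : ℕ × ℕ) = (n, m) + unitStep true from rfl, sum_point_add_unitStep,
          ih (fun i h1 h2 ↦ hα i h1 (by omega)) hβ (by omega), mul_right_comm,
          prod_Icc_inv_succ_mul α n (hα _ (by omega) le_rfl).ne']
    have hy : ∑ s : Fin k → Bool with point s k + unitStep false = (n, m),
        weight (fun p ↦ (α p.1 + β p.2)⁻¹) s = P * β m := by
      rcases m with _ | m
      · rw [hβ0, mul_zero]
        exact sum_eq_zero fun s hs ↦
          absurd (congrArg Prod.snd (mem_filter.1 hs).2) (by simp [unitStep])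
      · rw [show ((n, m + 1) : ℕ × ℕ) = (n, m) + unitStep false from rfl, sum_point_add_unitStep,
          ih hα (fun j h1 h2 ↦ hβ j h1 (by omega)) (by omega), mul_assoc,
          prod_Icc_inv_succ_mul β m (hβ _ (by omega) le_rfl).ne']
    have hpos : 0 < α n + β m := by
      rcases Nat.eq_zero_or_pos n with rfl | hn
      · rw [hα0, zero_add]; exact hβ m (by omega) le_rfl
      rcases Nat.eq_zero_or_pos m with rfl | hm
      · rw [hβ0, add_zero]; exact hα n hn le_rfl
      exact add_pos (hα n hn le_rfl) (hβ m hm le_rfl)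
    rw [pathSum_succ, Fintype.sum_bool, hx, hy, ← mul_add, mul_comm P]
    exact inv_mul_cancel_left₀ hpos.ne' P

end InverseSums

section FinPaths

variable {n m : ℕ}

abbrev IsLatticePath (n m : ℕ) (σ : Fin (n + m + 1) → Fin (n + 1) × Fin (m + 1)) : Prop :=
  ((σ 0).1 : ℕ) = 0 ∧ ((σ 0).2 : ℕ) = 0 ∧
    ((σ (Fin.last (n + m))).1 : ℕ) = n ∧ ((σ (Fin.last (n + m))).2 : ℕ) = m ∧
    ∀ i : Fin (n + m),
      (((σ i.succ).1 : ℕ) = ((σ i.castSucc).1 : ℕ) + 1 ∧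
        ((σ i.succ).2 : ℕ) = ((σ i.castSucc).2 : ℕ)) ∨
      (((σ i.succ).1 : ℕ) = ((σ i.castSucc).1 : ℕ) ∧
        ((σ i.succ).2 : ℕ) = ((σ i.castSucc).2 : ℕ) + 1)

def steps (σ : Fin (n + m + 1) → Fin (n + 1) × Fin (m + 1)) : Fin (n + m) → Bool :=
  fun i ↦ decide (((σ i.succ).1 : ℕ) = (σ i.castSucc).1 + 1)

lemma IsLatticePath.coe_eq_point {σ : Fin (n + m + 1) → Fin (n + 1) × Fin (m + 1)}
    (hσ : IsLatticePath n m σ) (i : Fin (n + m + 1)) :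
    (((σ i).1 : ℕ), ((σ i).2 : ℕ)) = point (steps σ) i := by
  induction i using Fin.induction with
  | zero => simp [hσ.1, hσ.2.1]
  | succ i ih =>
    rw [Fin.val_castSucc] at ih
    rw [Fin.val_succ, point_succ, ← ih]
    rcases hσ.2.2.2.2 i with ⟨h1, h2⟩ | ⟨h1, h2⟩ <;> simp [steps, unitStep, h1, h2]

def ofSteps (s : Fin (n + m) → Bool) (hs : point s (n + m) = (n, m)) :
    Fin (n + m + 1) → Fin (n + 1) × Fin (m + 1) :=
  fun i ↦
    have hi : point s i ≤ (n, m) := hs ▸ point_mono s (Nat.lt_succ_iff.1 i.is_lt)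
    (⟨(point s i).1, Nat.lt_succ_of_le hi.1⟩, ⟨(point s i).2, Nat.lt_succ_of_le hi.2⟩)

lemma isLatticePath_ofSteps (s : Fin (n + m) → Bool) (hs : point s (n + m) = (n, m)) :
    IsLatticePath n m (ofSteps s hs) := by
  refine ⟨by simp [ofSteps], by simp [ofSteps], by simp [ofSteps, hs], by simp [ofSteps, hs],
    fun i ↦ ?_⟩
  cases h : s i <;> simp [ofSteps, point_succ, h, unitStep]

lemma steps_ofSteps (s : Fin (n + m) → Bool) (hs : point s (n + m) = (n, m)) :
    steps (ofSteps s hs) = s := by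
  funext i
  cases h : s i <;> simp [steps, ofSteps, point_succ, h, unitStep]

variable {R : Type*} [CommSemiring R]

theorem sum_isLatticePath (F : ℕ × ℕ → R) :
    ∑ σ with IsLatticePath n m σ, ∏ i : Fin (n + m), F ((σ i.succ).1, (σ i.succ).2) =
      pathSum F (n + m) (n, m) := by
  refine sum_bij (fun σ _ ↦ steps σ) (fun σ hσ ↦ ?_) (fun σ hσ τ hτ h ↦ ?_) (fun s hs ↦ ?_)
    (fun σ hσ ↦ ?_)
  · obtain ⟨-, hσ⟩ := mem_filter.1 hσ
    have hlast := hσ.coe_eq_point (Fin.last _)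
    rw [hσ.2.2.1, hσ.2.2.2.1, Fin.val_last] at hlast
    exact mem_filter.2 ⟨mem_univ _, hlast.symm⟩
  · funext i
    have hi := (mem_filter.1 hσ).2.coe_eq_point i
    rw [h, ← (mem_filter.1 hτ).2.coe_eq_point i, Prod.mk.injEq] at hi
    exact Prod.ext (Fin.ext hi.1) (Fin.ext hi.2)
  · have hs := (mem_filter.1 hs).2
    exact ⟨ofSteps s hs, mem_filter.2 ⟨mem_univ _, isLatticePath_ofSteps s hs⟩,
      steps_ofSteps s hs⟩
  · refine prod_congr rfl fun i _ ↦ ?_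
    rw [← Fin.val_succ, ← (mem_filter.1 hσ).2.coe_eq_point]

end FinPaths

end LatticeWalk

open scoped Classical in
/-- Lattice-path product identity: for positive reals `(α_i)_{i=1}^n` and
`(β_j)_{j=1}^m` (with the convention `α_0 = β_0 = 0`), the sum over all
monotone lattice paths `σ` from `(0,0)` to `(n,m)` of
`∏_{i=1}^{n+m} 1/(α_{σ_x(i)} + β_{σ_y(i)})` equals
`(∏_{i=1}^n 1/α_i)(∏_{j=1}^m 1/β_j)`. -/
theorem stmt_1 (n m : ℕ) (α β : ℕ → ℝ)
    (hα0 : α 0 = 0) (hβ0 : β 0 = 0)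
    (hα : ∀ i, 1 ≤ i → i ≤ n → 0 < α i)
    (hβ : ∀ j, 1 ≤ j → j ≤ m → 0 < β j) :
    ∑ σ ∈ Finset.univ.filter
        (fun σ : Fin (n + m + 1) → Fin (n + 1) × Fin (m + 1) =>
          ((σ 0).1 : ℕ) = 0 ∧ ((σ 0).2 : ℕ) = 0 ∧
          ((σ (Fin.last (n + m))).1 : ℕ) = n ∧
          ((σ (Fin.last (n + m))).2 : ℕ) = m ∧
          ∀ i : Fin (n + m),
            (((σ i.succ).1 : ℕ) = ((σ i.castSucc).1 : ℕ) + 1 ∧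
              ((σ i.succ).2 : ℕ) = ((σ i.castSucc).2 : ℕ)) ∨
            (((σ i.succ).1 : ℕ) = ((σ i.castSucc).1 : ℕ) ∧
              ((σ i.succ).2 : ℕ) = ((σ i.castSucc).2 : ℕ) + 1)),
      ∏ i : Fin (n + m), (α ((σ i.succ).1 : ℕ) + β ((σ i.succ).2 : ℕ))⁻¹ =
    (∏ i ∈ Finset.Icc 1 n, (α i)⁻¹) * ∏ j ∈ Finset.Icc 1 m, (β j)⁻¹ :=
  (LatticeWalk.sum_isLatticePath fun p ↦ (α p.1 + β p.2)⁻¹).trans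
    (LatticeWalk.pathSum_inv_add α β hα0 hβ0 hα hβ)
end

section
/- Let ν be a strictly positive log-supermodular probability measure on the finite lattice {0,1}^n (i.e., ν(x ∨ y)·ν(x ∧ y) ≥ ν(x)·ν(y) for all x, y, where ∨ and ∧ are coordinatewise max and min). Then for any two functions f, g : {0,1}^n → ℝ that are both nondecreasing with respect to the coordinatewise partial order, ∑_x f(x)g(x)ν(x) · ∑_x ν(x) ≥ ∑_x f(x)ν(x) · ∑_x g(x)ν(x). -/
/-- FKG inequality on the Boolean lattice `{0,1}^n`: if `ν` is a strictly
positive log-supermodular weight (`ν(x ∨ y)·ν(x ∧ y) ≥ ν(x)·ν(y)` with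
coordinatewise max/min), then for any two nondecreasing functions
`f, g : {0,1}^n → ℝ`,
`(∑ f·g·ν)·(∑ ν) ≥ (∑ f·ν)·(∑ g·ν)`. -/
theorem stmt_15 (n : ℕ) (ν : (Fin n → Bool) → ℝ)
    (hpos : ∀ x, 0 < ν x)
    (hfkg : ∀ x y, ν x * ν y ≤ ν (x ⊔ y) * ν (x ⊓ y))
    (f g : (Fin n → Bool) → ℝ) (hf : Monotone f) (hg : Monotone g) :
    (∑ x : Fin n → Bool, f x * ν x) * (∑ x : Fin n → Bool, g x * ν x) ≤
      (∑ x : Fin n → Bool, f x * g x * ν x) * (∑ x : Fin n → Bool, ν x) := by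
  classical
  set a := ∑ x : Fin n → Bool, |f x| with ha
  set b := ∑ x : Fin n → Bool, |g x| with hb
  have hfa : ∀ x, 0 ≤ f x + a := by
    intro x
    have h1 : |f x| ≤ a := Finset.single_le_sum (f := fun y => |f y|)
      (fun y _ => abs_nonneg _) (Finset.mem_univ x)
    linarith [neg_abs_le (f x)]
  have hgb : ∀ x, 0 ≤ g x + b := by
    intro x
    have h1 : |g x| ≤ b := Finset.single_le_sum (f := fun y => |g y|)
      (fun y _ => abs_nonneg _) (Finset.mem_univ x)
    linarith [neg_abs_le (g x)]
  have key := fkg (μ := ν) (f := fun x => f x + a) (g := fun x => g x + b)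
    (fun x => (hpos x).le) hfa hgb
    (fun x y hxy => by simpa using hf hxy)
    (fun x y hxy => by simpa using hg hxy)
    (fun x y => (hfkg x y).trans_eq (mul_comm _ _))
  set S := ∑ x : Fin n → Bool, ν x with hS
  set F := ∑ x : Fin n → Bool, f x * ν x with hF
  set G := ∑ x : Fin n → Bool, g x * ν x with hG
  set H := ∑ x : Fin n → Bool, f x * g x * ν x with hH
  have e1 : (∑ x : Fin n → Bool, ν x * (f x + a)) = F + a * S := by
    rw [hF, hS, Finset.mul_sum, ← Finset.sum_add_distrib]
    exact Finset.sum_congr rfl fun x _ => by ring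
  have e2 : (∑ x : Fin n → Bool, ν x * (g x + b)) = G + b * S := by
    rw [hG, hS, Finset.mul_sum, ← Finset.sum_add_distrib]
    exact Finset.sum_congr rfl fun x _ => by ring
  have e3 : (∑ x : Fin n → Bool, ν x * ((f x + a) * (g x + b)))
      = H + a * G + b * F + a * b * S := by
    rw [hH, hG, hF, hS, Finset.mul_sum, Finset.mul_sum, Finset.mul_sum,
      ← Finset.sum_add_distrib, ← Finset.sum_add_distrib, ← Finset.sum_add_distrib]
    exact Finset.sum_congr rfl fun x _ => by ring
  rw [e1, e2, e3] at key
  nlinarith [key]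
end
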